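/- arXiv:1406.5143 — 7 statements merged into one kernel-verified Lean document; each statement's English description precedes it below -/
import Mathlib

section
/- Let p = Bernoulli((1+b)/2) and q = Bernoulli((1-b)/2) with b ∈ [0, 1/2]. Then D_KL(p‖q) ≤ 6b². -/
/-! The divergence equals `b * log ((1 + b) / (1 - b))`, and `log x ≤ x - 1` bounds the logarithm
by `2b / (1 - b) ≤ 4b`, so the divergence is in fact at most `4 b²`. -/

open Real

theorem mul_log_div_add_mul_log_div (p q : ℝ) :
    p * log (p / q) + q * log (q / p) = (p - q) * log (p / q) := by
  rw [← inv_div p q, log_inv]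
  ring

theorem log_one_add_div_one_sub_le {b : ℝ} (hb0 : 0 ≤ b) (hb1 : b < 1) :
    log ((1 + b) / (1 - b)) ≤ 2 * b / (1 - b) := by
  have h1 : 0 < 1 - b := by linarith
  calc log ((1 + b) / (1 - b)) ≤ (1 + b) / (1 - b) - 1 :=
        log_le_sub_one_of_pos (by positivity)
    _ = 2 * b / (1 - b) := by field_simp; ring

/-- For `b ∈ [0, 1/2]`, the KL divergence between `Bernoulli((1+b)/2)` and
`Bernoulli((1-b)/2)` is at most `6 b²`. -/
theorem stmt4 (b : ℝ) (hb0 : 0 ≤ b) (hb : b ≤ 1 / 2) :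
    ((1 + b) / 2) * Real.log (((1 + b) / 2) / ((1 - b) / 2))
      + ((1 - b) / 2) * Real.log (((1 - b) / 2) / ((1 + b) / 2)) ≤ 6 * b ^ 2 := by
  have h1 : 0 < 1 - b := by linarith
  have hratio : ((1 + b) / 2) / ((1 - b) / 2) = (1 + b) / (1 - b) := by field_simp
  have hlog : log ((1 + b) / (1 - b)) ≤ 4 * b :=
    calc log ((1 + b) / (1 - b)) ≤ 2 * b / (1 - b) :=
          log_one_add_div_one_sub_le hb0 (by linarith)
      _ ≤ 4 * b := by rw [div_le_iff₀ h1]; nlinarith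
  rw [mul_log_div_add_mul_log_div, hratio]
  calc ((1 + b) / 2 - (1 - b) / 2) * log ((1 + b) / (1 - b))
        = b * log ((1 + b) / (1 - b)) := by ring
    _ ≤ b * (4 * b) := mul_le_mul_of_nonneg_left hlog hb0
    _ ≤ 6 * b ^ 2 := by nlinarith
end

section
/- Let α, γ ∈ (0,1] with γ < α, and let distributions D₀, D₁ on ℝ be: under D₀, X = Y/B with probability α and 0 otherwise; under D₁, X = 1 with probability γ, X = Y/B with probability α − γ, and 0 otherwise (with 0 < Y, B). Then D_KL(D₀ ‖ D₁) ≤ γ(1 + γ/(α − γ)). -/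
open Real

theorem Real.log_div_self_eq_zero (x : ℝ) : log (x / x) = 0 := by
  obtain rfl | hx := eq_or_ne x 0
  · simp
  · rw [div_self hx, log_one]

theorem Real.mul_log_div_le {a b : ℝ} (ha : 0 ≤ a) (hb : 0 < b) :
    a * log (a / b) ≤ a * (a / b - 1) := by
  obtain rfl | ha := ha.eq_or_lt
  · simp
  · exact mul_le_mul_of_nonneg_left (log_le_sub_one_of_pos (div_pos ha hb)) ha.le

/-- The three summands are the contributions of the atoms `0`, `Y/B` and `1` to `D_KL(D₀‖D₁)`. -/
theorem stmt5_general (α γ : ℝ)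
    (hγ : 0 < γ) (hγα : γ < α) :
    (1 - α) * Real.log ((1 - α) / (1 - α)) + α * Real.log (α / (α - γ))
      + 0 * Real.log (0 / γ) ≤ γ * (1 + γ / (α - γ)) := by
  have hαγ : 0 < α - γ := sub_pos.2 hγα
  rw [log_div_self_eq_zero, mul_zero, zero_mul, zero_add, add_zero]
  calc α * log (α / (α - γ)) ≤ α * (α / (α - γ) - 1) := mul_log_div_le (by linarith) hαγ
    _ = γ * (1 + γ / (α - γ)) := by field_simp; ring

/-- KL divergence between the two distributions on `{0, Y/B, 1}`:
`D₀` puts mass `α` at `Y/B` and `1 - α` at `0`; `D₁` puts mass `γ` at `1`,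
`α - γ` at `Y/B` and `1 - α` at `0`.  Then
`D_KL(D₀‖D₁) = (1-α) log((1-α)/(1-α)) + α log(α/(α-γ)) + 0 · log(0/γ) ≤ γ (1 + γ/(α-γ))`. -/
theorem stmt5 (Y B α γ : ℝ) (hY : 0 < Y) (hB : 0 < B)
    (hγ : 0 < γ) (hγα : γ < α) (hα : α ≤ 1) :
    (1 - α) * Real.log ((1 - α) / (1 - α)) + α * Real.log (α / (α - γ))
      + 0 * Real.log (0 / γ) ≤ γ * (1 + γ / (α - γ)) :=
  stmt5_general α γ hγ hγα
end

section
/- Under the distribution where y = Y almost surely and x = 1 with probability γ, x = Y/B with probability α − γ, x = 0 with probability 1 − α (0 < γ < α ≤ 1, 0 < Y ≤ B/2), the unconstrained least-squares minimizer w₁* = E[yx]/E[x²] equals B·(Y²(α−γ) + BYγ)/(Y²(α−γ) + B²γ), and satisfies (w₁* − B)² ≥ B⁴γ²((Y−B)/(Y²α + B²γ))². -/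
/-!
Multiplying numerator and denominator by `B²` gives the closed form, and then
`w₁* - B = B²γ(Y - B) / (Y²(α - γ) + B²γ)`. The bound follows because this denominator is
positive and at most `Y²α + B²γ`.
-/

theorem div_sq_le_div_sq_of_le {c d₁ d₂ : ℝ} (hd₁ : 0 < d₁) (hd : d₁ ≤ d₂) :
    (c / d₂) ^ 2 ≤ (c / d₁) ^ 2 := by
  rw [div_pow, div_pow]
  exact div_le_div_of_nonneg_left (sq_nonneg c) (by positivity) (pow_le_pow_left₀ hd₁.le hd 2)

section LeastSquares

variable {Y B α γ : ℝ}

-- When the denominator vanishes, both sides are `0` since `x / 0 = 0`.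
theorem leastSquares_ratio_eq (hB : B ≠ 0) :
    (Y * (γ * 1 + (α - γ) * (Y / B))) / (γ * 1 ^ 2 + (α - γ) * (Y / B) ^ 2)
      = B * (Y ^ 2 * (α - γ) + B * Y * γ) / (Y ^ 2 * (α - γ) + B ^ 2 * γ) := by
  have hnum : Y * (γ * 1 + (α - γ) * (Y / B)) = (Y ^ 2 * (α - γ) + B * Y * γ) / B := by
    field_simp
    ring
  have hden : γ * 1 ^ 2 + (α - γ) * (Y / B) ^ 2 = (Y ^ 2 * (α - γ) + B ^ 2 * γ) / B ^ 2 := by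
    field_simp
    ring
  have hcancel (N D : ℝ) : N / B / (D / B ^ 2) = B * N / D := by
    rw [div_div_div_eq, sq, ← mul_assoc, mul_comm B D, mul_div_mul_right _ _ hB, mul_comm]
  rw [hnum, hden, hcancel]

theorem leastSquares_ratio_sub_eq (hD : Y ^ 2 * (α - γ) + B ^ 2 * γ ≠ 0) :
    B * (Y ^ 2 * (α - γ) + B * Y * γ) / (Y ^ 2 * (α - γ) + B ^ 2 * γ) - B
      = B ^ 2 * γ * (Y - B) / (Y ^ 2 * (α - γ) + B ^ 2 * γ) := by
  field_simp
  ring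

end LeastSquares

theorem stmt6_general (Y B α γ : ℝ) (hY : 0 < Y) (hB : 2 * Y ≤ B)
    (hγ : 0 < γ) (hγα : γ < α) :
    (Y * (γ * 1 + (α - γ) * (Y / B))) / (γ * 1 ^ 2 + (α - γ) * (Y / B) ^ 2)
        = B * (Y ^ 2 * (α - γ) + B * Y * γ) / (Y ^ 2 * (α - γ) + B ^ 2 * γ)
      ∧ (B * (Y ^ 2 * (α - γ) + B * Y * γ) / (Y ^ 2 * (α - γ) + B ^ 2 * γ) - B) ^ 2
        ≥ B ^ 4 * γ ^ 2 * ((Y - B) / (Y ^ 2 * α + B ^ 2 * γ)) ^ 2 := by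
  have hB0 : 0 < B := by linarith
  have hαγ : 0 < α - γ := by linarith
  have hD : 0 < Y ^ 2 * (α - γ) + B ^ 2 * γ := by positivity
  have hDle : Y ^ 2 * (α - γ) + B ^ 2 * γ ≤ Y ^ 2 * α + B ^ 2 * γ := by nlinarith
  refine ⟨leastSquares_ratio_eq hB0.ne', ?_⟩
  rw [leastSquares_ratio_sub_eq hD.ne', ge_iff_le]
  calc B ^ 4 * γ ^ 2 * ((Y - B) / (Y ^ 2 * α + B ^ 2 * γ)) ^ 2
      = (B ^ 2 * γ * (Y - B) / (Y ^ 2 * α + B ^ 2 * γ)) ^ 2 := by ring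
    _ ≤ _ := div_sq_le_div_sq_of_le hD hDle

/-- Under the distribution where `y = Y` a.s. and `x = 1` w.p. `γ`, `x = Y/B` w.p. `α - γ`,
`x = 0` w.p. `1 - α`, the unconstrained least-squares minimizer `w₁* = E[yx]/E[x²]`
equals `B (Y²(α-γ) + BYγ) / (Y²(α-γ) + B²γ)` and satisfies
`(w₁* - B)² ≥ B⁴ γ² ((Y-B)/(Y²α + B²γ))²`. -/
theorem stmt6 (Y B α γ : ℝ) (hY : 0 < Y) (hB : 2 * Y ≤ B)
    (hγ : 0 < γ) (hγα : γ < α) (hα : α ≤ 1) :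
    (Y * (γ * 1 + (α - γ) * (Y / B))) / (γ * 1 ^ 2 + (α - γ) * (Y / B) ^ 2)
        = B * (Y ^ 2 * (α - γ) + B * Y * γ) / (Y ^ 2 * (α - γ) + B ^ 2 * γ)
      ∧ (B * (Y ^ 2 * (α - γ) + B * Y * γ) / (Y ^ 2 * (α - γ) + B ^ 2 * γ) - B) ^ 2
        ≥ B ^ 4 * γ ^ 2 * ((Y - B) / (Y ^ 2 * α + B ^ 2 * γ)) ^ 2 :=
  stmt6_general Y B α γ hY hB hγ hγα
end

section
/- For any two real numbers a < b and any real-valued random variable W defined on a probability space, with respect to two probability measures P₀, P₁: E₀[(W−a)²] + E₁[(W−b)²] ≥ ((b−a)/2)² · (1 − |P₀(W ≥ (a+b)/2) − P₁(W ≥ (a+b)/2)|). -/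
open MeasureTheory

/-- For `a < b`, a measurable real random variable `W`, and probability measures `P₀, P₁`:
`E₀[(W-a)²] + E₁[(W-b)²] ≥ ((b-a)/2)² (1 - |P₀(W ≥ (a+b)/2) - P₁(W ≥ (a+b)/2)|)`. -/
theorem stmt9 {Ω : Type*} [MeasurableSpace Ω] (P₀ P₁ : Measure Ω)
    [IsProbabilityMeasure P₀] [IsProbabilityMeasure P₁]
    (W : Ω → ℝ) (hW : Measurable W) (a b : ℝ) (hab : a < b)
    (h₀ : Integrable (fun ω => (W ω - a) ^ 2) P₀)
    (h₁ : Integrable (fun ω => (W ω - b) ^ 2) P₁) :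
    (∫ ω, (W ω - a) ^ 2 ∂P₀) + (∫ ω, (W ω - b) ^ 2 ∂P₁)
      ≥ ((b - a) / 2) ^ 2 *
        (1 - |(P₀ {ω | (a + b) / 2 ≤ W ω}).toReal - (P₁ {ω | (a + b) / 2 ≤ W ω}).toReal|) := by
  set m : ℝ := (a + b) / 2 with hm
  set c : ℝ := ((b - a) / 2) ^ 2 with hc
  set A : Set Ω := {ω | m ≤ W ω} with hA
  have hAm : MeasurableSet A := measurableSet_le measurable_const hW
  have hc0 : 0 ≤ c := sq_nonneg _
  -- bound 1
  have hb1 : c * (P₀ A).toReal ≤ ∫ ω, (W ω - a) ^ 2 ∂P₀ := by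
    have h1 : c * (P₀ A).toReal ≤ ∫ ω in A, (W ω - a) ^ 2 ∂P₀ := by
      apply setIntegral_ge_of_const_le_real hAm (measure_ne_top _ _)
      · intro x hx
        have hx' : m ≤ W x := hx
        have : (b - a) / 2 ≤ W x - a := by
          simp only [hm] at hx'; linarith
        calc c = ((b - a) / 2) ^ 2 := rfl
          _ ≤ (W x - a) ^ 2 := by
              apply sq_le_sq'
              · linarith
              · exact this
      · exact h₀.integrableOn
    refine h1.trans (setIntegral_le_integral h₀ ?_)
    filter_upwards with x using sq_nonneg _
  -- bound 2
  have hb2 : c * (P₁ Aᶜ).toReal ≤ ∫ ω, (W ω - b) ^ 2 ∂P₁ := by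
    have h1 : c * (P₁ Aᶜ).toReal ≤ ∫ ω in Aᶜ, (W ω - b) ^ 2 ∂P₁ := by
      apply setIntegral_ge_of_const_le_real hAm.compl (measure_ne_top _ _)
      · intro x hx
        have hx' : W x < m := lt_of_not_ge hx
        have : W x - b ≤ -((b - a) / 2) := by
          simp only [hm] at hx'; linarith
        have hba : 0 ≤ (b - a) / 2 := by linarith
        nlinarith [this, hba]
      · exact h₁.integrableOn
    refine h1.trans (setIntegral_le_integral h₁ ?_)
    filter_upwards with x using sq_nonneg _
  have hcompl : (P₁ Aᶜ).toReal = 1 - (P₁ A).toReal := by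
    have := prob_compl_eq_one_sub (μ := P₁) hAm
    rw [this, ENNReal.toReal_sub_of_le (prob_le_one) ENNReal.one_ne_top]
    simp
  have h0le : (P₀ A).toReal ≤ 1 := by
    simpa using ENNReal.toReal_mono ENNReal.one_ne_top (prob_le_one (μ := P₀) (s := A))
  have h1le : (P₁ A).toReal ≤ 1 := by
    simpa using ENNReal.toReal_mono ENNReal.one_ne_top (prob_le_one (μ := P₁) (s := A))
  have key : c * (1 - |(P₀ A).toReal - (P₁ A).toReal|)
      ≤ c * ((P₀ A).toReal + (1 - (P₁ A).toReal)) := by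
    apply mul_le_mul_of_nonneg_left _ hc0
    have := abs_le.mp (le_refl |(P₀ A).toReal - (P₁ A).toReal|)
    linarith [this.1]
  calc ((b - a) / 2) ^ 2 * (1 - |(P₀ A).toReal - (P₁ A).toReal|)
      ≤ c * ((P₀ A).toReal + (1 - (P₁ A).toReal)) := key
    _ = c * (P₀ A).toReal + c * (P₁ Aᶜ).toReal := by rw [hcompl]; ring
    _ ≤ (∫ ω, (W ω - a) ^ 2 ∂P₀) + (∫ ω, (W ω - b) ^ 2 ∂P₁) := add_le_add hb1 hb2
end

section
/- Fix σ ∈ {−1,+1}^{d'} and b = min{1/2, √(d'/(6m))}. Under the distribution D_σ where x is uniform over the first d' standard basis vectors of ℝ^{d'} and, conditioned on x = e_i, y = Y with probability (1+σ_i b)/2 and y = −Y otherwise, the minimizer of R(w) = E[(⟨w,x⟩−y)²] over {w : ‖w‖ ≤ B} has coordinates w*_i = σ_i · min{Yb, B/√d'}. -/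
open MeasureTheory
open scoped ENNReal

/-! Writing `a = Y b σ`, and using `σᵢ² = 1`, the risk is `R(w) = ‖w - a‖² / d' + Y² (1 - b²)`, so
minimizing `R` over the ball of radius `B` means finding the point of the ball nearest to `a`.
That point is the nonnegative multiple of `a` of norm `min ‖a‖ B`, and since `‖σ‖ = √d'`,
this multiple is exactly `w*`. -/

theorem norm_sub_le_of_sameRay_of_norm_eq_min {E : Type*} [NormedAddCommGroup E]
    [NormedSpace ℝ E] {a v w : E} {B : ℝ} (hva : SameRay ℝ v a) (hv : ‖v‖ = min ‖a‖ B)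
    (hw : ‖w‖ ≤ B) : ‖v - a‖ ≤ ‖w - a‖ := by
  rw [hva.norm_sub, hv, abs_of_nonpos (sub_nonpos.2 (min_le_left _ _)), norm_sub_rev]
  have := norm_sub_norm_le a w
  rcases min_cases ‖a‖ B with ⟨h, _⟩ | ⟨h, _⟩ <;> rw [h] <;> linarith [norm_nonneg (a - w)]

theorem integral_finsetSum_smul_dirac_add_smul_dirac {ι α E : Type*} [MeasurableSpace α]
    [MeasurableSingletonClass α] [NormedAddCommGroup E] [NormedSpace ℝ E] [CompleteSpace E]
    (s : Finset ι) {p q : ι → ℝ≥0∞} (hp : ∀ i, p i ≠ ∞) (hq : ∀ i, q i ≠ ∞) (x y : ι → α)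
    (f : α → E) :
    ∫ z, f z ∂(∑ i ∈ s, (p i • Measure.dirac (x i) + q i • Measure.dirac (y i))) =
      ∑ i ∈ s, ((p i).toReal • f (x i) + (q i).toReal • f (y i)) := by
  have hx i : Integrable f (p i • Measure.dirac (x i)) :=
    (integrable_dirac enorm_lt_top).smul_measure (hp i)
  have hy i : Integrable f (q i • Measure.dirac (y i)) :=
    (integrable_dirac enorm_lt_top).smul_measure (hq i)
  rw [integral_finsetSum_measure fun i _ => (hx i).add_measure (hy i)]
  refine Finset.sum_congr rfl fun i _ => ?_
  rw [integral_add_measure (hx i) (hy i), integral_smul_measure, integral_smul_measure,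
    integral_dirac, integral_dirac]

/-- The distribution `D_σ` of the paper. -/
noncomputable def labeledBasisMeasure {n : ℕ} (σ : Fin n → ℝ) (b Y : ℝ) :
    Measure (EuclideanSpace ℝ (Fin n) × ℝ) :=
  (n : ℝ≥0∞)⁻¹ • ∑ i : Fin n,
    (ENNReal.ofReal ((1 + σ i * b) / 2) • Measure.dirac (EuclideanSpace.single i 1, Y)
      + ENNReal.ofReal ((1 - σ i * b) / 2) • Measure.dirac (EuclideanSpace.single i 1, -Y))

theorem integral_sq_loss_labeledBasisMeasure {n : ℕ} {σ : Fin n → ℝ}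
    (hσ : ∀ i, σ i = 1 ∨ σ i = -1) {b : ℝ} (hb : |b| ≤ 1) (Y : ℝ)
    (w : EuclideanSpace ℝ (Fin n)) :
    ∫ p, (inner ℝ w p.1 - p.2 : ℝ) ^ 2 ∂labeledBasisMeasure σ b Y =
      (‖w - (Y * b) • WithLp.toLp 2 σ‖ ^ 2 + n * (Y ^ 2 * (1 - b ^ 2))) / n := by
  have hσb i : |σ i * b| ≤ 1 := by rcases hσ i with h | h <;> simpa [h] using hb
  have hp i : (ENNReal.ofReal ((1 + σ i * b) / 2)).toReal = (1 + σ i * b) / 2 :=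
    ENNReal.toReal_ofReal (by linarith [(abs_le.1 (hσb i)).1])
  have hq i : (ENNReal.ofReal ((1 - σ i * b) / 2)).toReal = (1 - σ i * b) / 2 :=
    ENNReal.toReal_ofReal (by linarith [(abs_le.1 (hσb i)).2])
  have hcoord i : (1 + σ i * b) / 2 * (w i - Y) ^ 2 + (1 - σ i * b) / 2 * (w i - -Y) ^ 2 =
      (w i - Y * b * σ i) ^ 2 + Y ^ 2 * (1 - b ^ 2) := by
    have hσsq : σ i ^ 2 = 1 := by rcases hσ i with h | h <;> simp [h]
    linear_combination (-(Y * b) ^ 2) * hσsq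
  rw [labeledBasisMeasure, integral_smul_measure, integral_finsetSum_smul_dirac_add_smul_dirac
    _ (fun _ => ENNReal.ofReal_ne_top) (fun _ => ENNReal.ofReal_ne_top),
    EuclideanSpace.real_norm_sq_eq]
  simp only [EuclideanSpace.inner_single_right, ENNReal.toReal_inv, ENNReal.toReal_natCast,
    hp, hq, conj_trivial, one_mul, smul_eq_mul, hcoord, Finset.sum_add_distrib, PiLp.sub_apply,
    PiLp.smul_apply, Finset.sum_const, Finset.card_univ, Fintype.card_fin, nsmul_eq_mul]
  rw [inv_mul_eq_div]

theorem stmt12_general (d' m : ℕ) (hd' : 0 < d') (Y B : ℝ) (hY : 0 < Y) (hB : 0 < B)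
    (σ : Fin d' → ℝ) (hσ : ∀ i, σ i = 1 ∨ σ i = -1)
    (b : ℝ) (hb : b = min (1 / 2) (Real.sqrt (d' / (6 * m))))
    (μ : Measure (EuclideanSpace ℝ (Fin d') × ℝ))
    (hμ : μ = (d' : ℝ≥0∞)⁻¹ • ∑ i : Fin d',
        (ENNReal.ofReal ((1 + σ i * b) / 2) • Measure.dirac (EuclideanSpace.single i 1, Y)
          + ENNReal.ofReal ((1 - σ i * b) / 2) • Measure.dirac (EuclideanSpace.single i 1, -Y)))
    (wstar : EuclideanSpace ℝ (Fin d'))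
    (hws : ∀ i, wstar i = σ i * min (Y * b) (B / Real.sqrt d')) :
    ‖wstar‖ ≤ B ∧
      ∀ w : EuclideanSpace ℝ (Fin d'), ‖w‖ ≤ B →
        (∫ p, (inner ℝ wstar p.1 - p.2 : ℝ) ^ 2 ∂μ) ≤ ∫ p, (inner ℝ w p.1 - p.2 : ℝ) ^ 2 ∂μ := by
  have hb0 : 0 ≤ b := hb ▸ le_min (by norm_num) (Real.sqrt_nonneg _)
  have hb1 : |b| ≤ 1 := abs_le.2 ⟨by linarith, hb ▸ (min_le_left _ _).trans (by norm_num)⟩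
  have hsqrt : 0 < √(d' : ℝ) := Real.sqrt_pos.2 (Nat.cast_pos.2 hd')
  set s : EuclideanSpace ℝ (Fin d') := WithLp.toLp 2 σ
  set c := min (Y * b) (B / √(d' : ℝ))
  have hc : 0 ≤ c := le_min (by positivity) (by positivity)
  have hs : ‖s‖ = √(d' : ℝ) := by
    have hσ_abs i : ‖σ i‖ = 1 := by rcases hσ i with h | h <;> simp [h]
    simp [EuclideanSpace.norm_eq, s, hσ_abs]
  have hwstar : wstar = c • s := by ext i; simp [s, hws, mul_comm]
  have hnorm : ‖wstar‖ = min ‖(Y * b) • s‖ B := by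
    rw [hwstar, norm_smul, norm_smul, hs, Real.norm_of_nonneg hc,
      Real.norm_of_nonneg (by positivity), min_mul_of_nonneg _ _ hsqrt.le,
      div_mul_cancel₀ _ hsqrt.ne']
  refine ⟨hnorm ▸ min_le_right _ _, fun w hw => ?_⟩
  rw [hμ, ← labeledBasisMeasure, integral_sq_loss_labeledBasisMeasure hσ hb1,
    integral_sq_loss_labeledBasisMeasure hσ hb1]
  gcongr
  refine norm_sub_le_of_sameRay_of_norm_eq_min ?_ hnorm hw
  exact hwstar ▸ (SameRay.sameRay_nonneg_smul_left s hc).nonneg_smul_right (by positivity)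

/-- Under the distribution `D_σ` where `x` is uniform over the standard basis vectors
`e₁, …, e_{d'}` of `ℝ^{d'}` and, conditioned on `x = e_i`, `y = Y` with probability
`(1 + σᵢ b)/2` and `y = -Y` otherwise (with `b = min{1/2, √(d'/(6m))}`), the minimizer of
`R(w) = E[(⟨w,x⟩ - y)²]` over `{w : ‖w‖ ≤ B}` has coordinates
`w*ᵢ = σᵢ · min{Y b, B/√d'}`. -/
theorem stmt12 (d' m : ℕ) (hd' : 0 < d') (hm : 0 < m) (Y B : ℝ) (hY : 0 < Y) (hB : 0 < B)
    (σ : Fin d' → ℝ) (hσ : ∀ i, σ i = 1 ∨ σ i = -1)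
    (b : ℝ) (hb : b = min (1 / 2) (Real.sqrt (d' / (6 * m))))
    (μ : Measure (EuclideanSpace ℝ (Fin d') × ℝ))
    (hμ : μ = (d' : ℝ≥0∞)⁻¹ • ∑ i : Fin d',
        (ENNReal.ofReal ((1 + σ i * b) / 2) • Measure.dirac (EuclideanSpace.single i 1, Y)
          + ENNReal.ofReal ((1 - σ i * b) / 2) • Measure.dirac (EuclideanSpace.single i 1, -Y)))
    (wstar : EuclideanSpace ℝ (Fin d'))
    (hws : ∀ i, wstar i = σ i * min (Y * b) (B / Real.sqrt d')) :
    ‖wstar‖ ≤ B ∧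
      ∀ w : EuclideanSpace ℝ (Fin d'), ‖w‖ ≤ B →
        (∫ p, (inner ℝ wstar p.1 - p.2 : ℝ) ^ 2 ∂μ) ≤ ∫ p, (inner ℝ w p.1 - p.2 : ℝ) ^ 2 ∂μ :=
  stmt12_general d' m hd' Y B hY hB σ hσ b hb μ hμ wstar hws
end

section
/- For real numbers B ≥ 2Y > 0 and integer m ≥ 1, with γ = 1/(3m) and α = 1, if m ≤ B²/Y² then (1/8)·Y²·α·B²·γ²·((Y−B)/(Y²α + B²γ))²·(1 − √((m/2)·γ·(1 + γ/(α−γ)))) ≥ (3/4000)·Y². -/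
/-!
Since `mγ = 1/3`, the square-root argument equals `(1/6)/(1 - γ) ≤ 1/4`, so the last factor is
at least `1/2`. The hypothesis `m ≤ B²/Y²` becomes `Y² ≤ 3B²γ`, hence `Y² + B²γ ≤ 4B²γ`, while
`B ≥ 2Y` gives `B - Y ≥ B/2`; so `Bγ(B - Y)/(Y² + B²γ) ≥ 1/8`, and the whole expression is at
least `Y²/1024 ≥ 3Y²/4000`.
-/

open Real

lemma one_add_div_one_sub {γ : ℝ} (hγ : γ ≠ 1) : 1 + γ / (1 - γ) = 1 / (1 - γ) := by
  field_simp [sub_ne_zero.mpr hγ.symm]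
  ring

lemma one_half_le_one_sub_sqrt {x : ℝ} (hx : x ≤ 1 / 4) : 1 / 2 ≤ 1 - √x := by
  have : √x ≤ 1 / 2 := Real.sqrt_le_iff.mpr ⟨by norm_num, by linarith⟩
  linarith

lemma one_div_eight_le_mul_sub_div {Y B γ : ℝ} (hY : 0 < Y) (hB : 2 * Y ≤ B) (hγ : 0 < γ)
    (hYB : Y ^ 2 ≤ 3 * B ^ 2 * γ) : 1 / 8 ≤ B * γ * (B - Y) / (Y ^ 2 + B ^ 2 * γ) := by
  have hB_pos : 0 < B := by linarith
  rw [le_div_iff₀ (by positivity)]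
  have hBγ : 0 ≤ B * γ := by positivity
  nlinarith [mul_le_mul_of_nonneg_left (show B / 2 ≤ B - Y by linarith) hBγ]

/-- Case `m ≤ B²/Y²` of the one-dimensional lower bound: with `α = 1` and `γ = 1/(3m)`,
the quantity `(1/8) Y² α B² γ² ((Y-B)/(Y²α + B²γ))² (1 - √((m/2) γ (1 + γ/(α-γ))))`
is at least `(3/4000) Y²`. -/
theorem stmt16 (Y B : ℝ) (m : ℕ) (hm : 1 ≤ m) (hY : 0 < Y) (hB : 2 * Y ≤ B)
    (hmB : (m : ℝ) ≤ B ^ 2 / Y ^ 2) (α γ : ℝ) (hα : α = 1) (hγ : γ = 1 / (3 * m)) :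
    (1 / 8) * Y ^ 2 * α * B ^ 2 * γ ^ 2 * ((Y - B) / (Y ^ 2 * α + B ^ 2 * γ)) ^ 2
        * (1 - Real.sqrt ((m / 2) * γ * (1 + γ / (α - γ))))
      ≥ (3 / 4000) * Y ^ 2 := by
  subst hα
  have hm' : (1 : ℝ) ≤ m := by exact_mod_cast hm
  have hmγ : m * γ = 1 / 3 := by rw [hγ]; field_simp
  have hγ_pos : 0 < γ := by rw [hγ]; positivity
  have hγ_le : γ ≤ 1 / 3 := by nlinarith
  have hYB : Y ^ 2 ≤ 3 * B ^ 2 * γ := by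
    nlinarith [(le_div_iff₀ (by positivity)).mp hmB]
  have hsqrt : 1 / 2 ≤ 1 - √((m / 2) * γ * (1 + γ / (1 - γ))) := by
    apply one_half_le_one_sub_sqrt
    rw [one_add_div_one_sub (by linarith), mul_one_div, div_le_iff₀ (by linarith)]
    nlinarith
  have hratio := one_div_eight_le_mul_sub_div hY hB hγ_pos hYB
  calc (1 / 8) * Y ^ 2 * 1 * B ^ 2 * γ ^ 2 * ((Y - B) / (Y ^ 2 * 1 + B ^ 2 * γ)) ^ 2
        * (1 - √((m / 2) * γ * (1 + γ / (1 - γ))))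
      = (1 / 8) * Y ^ 2 * (B * γ * (B - Y) / (Y ^ 2 + B ^ 2 * γ)) ^ 2
        * (1 - √((m / 2) * γ * (1 + γ / (1 - γ)))) := by ring
    _ ≥ (1 / 8) * Y ^ 2 * (1 / 8) ^ 2 * (1 / 2) := by gcongr
    _ ≥ (3 / 4000) * Y ^ 2 := by nlinarith [sq_nonneg Y]
end

section
/- For real numbers B ≥ 2Y > 0 and integer m with m > B²/Y², setting α = B²/(Y²m) and γ = 1/(3m), we have (1/8)·Y²·α·B²·γ²·((Y−B)/(Y²α + B²γ))²·(1 − √((m/2)·γ·(1 + γ/(α−γ)))) ≥ 0.001·B²/m. -/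
/-! With `α = B²/(Y²m)` and `γ = 1/(3m)` the denominator `Y²α + B²γ` equals `4B²/(3m)`, and the
product in front of `1 - √(…)` collapses to `(Y - B)²/(128 m)`. Since `B ≥ 2Y`, `(Y - B)² ≥ B²/4`.
It also gives `B² ≥ 4Y²`, i.e. `α ≥ 4/m`, so `γ/(α - γ) ≤ 1/11` and the radicand is at most
`(1/6)(12/11) = 2/11`, whence `1 - √(…) ≥ 0.512`. Finally `(1/4) · 0.512 / 128 = 0.001`. -/

lemma prefactor_eq_sq_sub_div {Y B m : ℝ} (hY : Y ≠ 0) (hB : B ≠ 0) (hm : m ≠ 0) :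
    (1 / 8) * Y ^ 2 * (B ^ 2 / (Y ^ 2 * m)) * B ^ 2 * (1 / (3 * m)) ^ 2
        * ((Y - B) / (Y ^ 2 * (B ^ 2 / (Y ^ 2 * m)) + B ^ 2 * (1 / (3 * m)))) ^ 2
      = (Y - B) ^ 2 / (128 * m) := by
  have hden : Y ^ 2 * (B ^ 2 / (Y ^ 2 * m)) + B ^ 2 * (1 / (3 * m)) = 4 * B ^ 2 / (3 * m) := by
    field_simp; ring
  rw [hden]
  field_simp
  ring

lemma radicand_le_two_div_eleven {m α : ℝ} (hm : 0 < m) (hα : 4 / m ≤ α) :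
    (m / 2) * (1 / (3 * m)) * (1 + 1 / (3 * m) / (α - 1 / (3 * m))) ≤ 2 / 11 := by
  have hαγ : 11 / (3 * m) ≤ α - 1 / (3 * m) := by
    have : 4 / m - 1 / (3 * m) = 11 / (3 * m) := by field_simp; ring
    linarith
  have hratio : 1 / (3 * m) / (α - 1 / (3 * m)) ≤ 1 / 11 :=
    calc 1 / (3 * m) / (α - 1 / (3 * m)) ≤ 1 / (3 * m) / (11 / (3 * m)) :=
          div_le_div_of_nonneg_left (by positivity) (by positivity) hαγ
      _ = 1 / 11 := by field_simp
  have hmγ : (m / 2) * (1 / (3 * m)) = 1 / 6 := by field_simp; ring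
  rw [hmγ]
  linarith

lemma one_sub_sqrt_radicand_ge {m α : ℝ} (hm : 0 < m) (hα : 4 / m ≤ α) :
    0.512 ≤ 1 - Real.sqrt ((m / 2) * (1 / (3 * m)) * (1 + 1 / (3 * m) / (α - 1 / (3 * m)))) := by
  have hsqrt : Real.sqrt ((m / 2) * (1 / (3 * m)) * (1 + 1 / (3 * m) / (α - 1 / (3 * m))))
      ≤ 0.488 :=
    (Real.sqrt_le_left (by norm_num)).2 ((radicand_le_two_div_eleven hm hα).trans (by norm_num))
  linarith

lemma sq_sub_ge_of_two_mul_le {Y B : ℝ} (hY : 0 ≤ Y) (hB : 2 * Y ≤ B) :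
    B ^ 2 / 4 ≤ (Y - B) ^ 2 := by
  nlinarith

/-- Case `m > B²/Y²` of the one-dimensional lower bound: with `α = B²/(Y²m)` and
`γ = 1/(3m)`, the quantity
`(1/8) Y² α B² γ² ((Y-B)/(Y²α + B²γ))² (1 - √((m/2) γ (1 + γ/(α-γ))))`
is at least `0.001 B²/m`. -/
theorem stmt17 (Y B : ℝ) (m : ℕ) (hY : 0 < Y) (hB : 2 * Y ≤ B)
    (hmB : B ^ 2 / Y ^ 2 < (m : ℝ)) (α γ : ℝ)
    (hα : α = B ^ 2 / (Y ^ 2 * m)) (hγ : γ = 1 / (3 * m)) :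
    (1 / 8) * Y ^ 2 * α * B ^ 2 * γ ^ 2 * ((Y - B) / (Y ^ 2 * α + B ^ 2 * γ)) ^ 2
        * (1 - Real.sqrt ((m / 2) * γ * (1 + γ / (α - γ))))
      ≥ 0.001 * B ^ 2 / m := by
  have hB0 : 0 < B := by linarith
  have hm : (0 : ℝ) < m := lt_trans (by positivity) hmB
  have hα4 : 4 / (m : ℝ) ≤ α := by
    rw [hα, div_le_div_iff₀ hm (by positivity)]
    have hB4 : 4 * Y ^ 2 ≤ B ^ 2 := by nlinarith
    nlinarith [mul_le_mul_of_nonneg_right hB4 hm.le]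
  have hsq := sq_sub_ge_of_two_mul_le hY.le hB
  have hroot := one_sub_sqrt_radicand_ge hm hα4
  subst hγ
  rw [hα, prefactor_eq_sq_sub_div hY.ne' hB0.ne' hm.ne', ← hα, ge_iff_le, div_mul_eq_mul_div,
    div_le_div_iff₀ hm (by positivity)]
  nlinarith [mul_le_mul hsq hroot (by norm_num) (sq_nonneg _), sq_nonneg B]
end
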